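/- arXiv:2411.19883 — 2 statements merged into one kernel-verified Lean document; each statement's English description precedes it below -/
import Mathlib

section
/- Let G be a finite group and K an idempotent semifield. Every indecomposable representation V of G over K with associated subgroup H is isomorphic to the quotient of the regular representation K[G] by the module congruence identifying g with gh for all g ∈ G and h ∈ H; this quotient is a free K-module with basis the set G/H of left cosets. -/
/-!
Over an idempotent semifield addition is zero-sum-free, so every invertible matrix is monomial:
each `ρ g` sends the line through a standard basis vector to another such line. Indecomposability
forces `G` to act transitively on these lines, since the coordinates reached from `i₀` and the
remaining ones would split `K^n` into two subrepresentations. An element of `H` acts on `e_{i₀}`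
by a scalar of finite order, which is `1` in an idempotent semifield; hence `g ↦ ρ g e_{i₀}`
descends to `G ⧸ H`, where it is, up to nonzero scalars, a bijection onto the standard basis.
So `K[G] → K^n`, `g ↦ ρ g e_{i₀}`, is `K[G] → K[G ⧸ H]` followed by an isomorphism, and the kernel
congruence of `K[G] → K[G ⧸ H]` is generated by `g ~ g h`.
-/
open Module Function

section Idempotent

variable {K : Type*}

theorem eq_zero_of_add_eq_zero_of_idem [AddMonoid K] (hidem : ∀ a : K, a + a = a) {a b : K}
    (h : a + b = 0) : a = 0 :=
  calc a = a + (a + b) := by rw [h, add_zero]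
    _ = a + b := by rw [← add_assoc, hidem]
    _ = 0 := h

theorem Finset.eq_zero_of_sum_eq_zero_of_idem [AddCommMonoid K] (hidem : ∀ a : K, a + a = a)
    {ι : Type*} {s : Finset ι} {f : ι → K} (h : ∑ i ∈ s, f i = 0) {i : ι} (hi : i ∈ s) :
    f i = 0 := by
  classical
  exact eq_zero_of_add_eq_zero_of_idem hidem ((s.add_sum_erase f hi).trans h)

theorem eq_one_of_pow_eq_one_of_idem [Semiring K] [IsRightCancelMulZero K] [Nontrivial K]
    (hidem : ∀ a : K, a + a = a) {c : K} {m : ℕ} (hm : m ≠ 0) (h : c ^ m = 1) : c = 1 := by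
  obtain ⟨m, rfl⟩ := Nat.exists_eq_succ_of_ne_zero hm
  -- `c` fixes the geometric sum `1 + c + ⋯ + c ^ m`, which is nonzero
  set t := ∑ k ∈ Finset.range m, c ^ (k + 1)
  have hsum : ∑ k ∈ Finset.range (m + 1), c ^ k = t + 1 := by
    rw [Finset.sum_range_succ', pow_zero]
  have hmul : c * ∑ k ∈ Finset.range (m + 1), c ^ k = t + 1 := by
    simp_rw [Finset.mul_sum, ← pow_succ']
    rw [Finset.sum_range_succ, h]
  have hne : t + 1 ≠ 0 := fun h0 =>
    one_ne_zero (eq_zero_of_add_eq_zero_of_idem hidem ((add_comm _ _).trans h0))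
  exact mul_right_cancel₀ (hsum ▸ hne) (by rw [hmul, one_mul, hsum])

end Idempotent

theorem Matrix.existsUnique_ne_zero_of_mul_eq_one {K ι : Type*} [Semiring K] [NoZeroDivisors K]
    [Nontrivial K] (hidem : ∀ a : K, a + a = a) [Fintype ι] [DecidableEq ι]
    {A B : Matrix ι ι K} (hAB : A * B = 1) (hBA : B * A = 1) (j : ι) : ∃! i, A i j ≠ 0 := by
  have hjj : ∑ k, B j k * A k j = 1 := by
    simpa [Matrix.mul_apply] using congrFun (congrFun hBA j) j
  obtain ⟨i, -, hi⟩ := Finset.exists_ne_zero_of_sum_ne_zero (hjj ▸ one_ne_zero)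
  refine ⟨i, right_ne_zero_of_mul hi, fun i' hi' => by_contra fun hne => ?_⟩
  have hi'i : ∑ k, A i' k * B k i = 0 := by
    simpa [Matrix.mul_apply, hne] using congrFun (congrFun hAB i') i
  exact mul_ne_zero hi' (left_ne_zero_of_mul hi)
    (Finset.eq_zero_of_sum_eq_zero_of_idem hidem hi'i (Finset.mem_univ j))

theorem Module.End.exists_apply_single_eq_smul_single {K ι : Type*} [CommSemiring K]
    [NoZeroDivisors K] [Nontrivial K] (hidem : ∀ a : K, a + a = a) [Fintype ι] [DecidableEq ι]
    {f : Module.End K (ι → K)} (hf : IsUnit f) (j : ι) :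
    ∃ i, ∃ c ≠ (0 : K), f (Pi.single j 1) = c • Pi.single i 1 := by
  obtain ⟨u, rfl⟩ := hf
  have hmat : ∀ v w : (Module.End K (ι → K)), v * w = 1 →
      LinearMap.toMatrix' v * LinearMap.toMatrix' w = 1 := fun v w h => by
    rw [← LinearMap.toMatrix'_mul, h, LinearMap.toMatrix'_one]
  obtain ⟨i, hi, huniq⟩ := Matrix.existsUnique_ne_zero_of_mul_eq_one hidem
    (hmat _ _ u.mul_inv) (hmat _ _ u.inv_mul) j
  simp only [LinearMap.toMatrix'_apply] at hi huniq
  refine ⟨i, _, hi, funext fun k => ?_⟩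
  by_cases hk : k = i
  · simp [hk]
  · simpa [hk] using mt (huniq k) hk

theorem eq_of_smul_single_eq_smul_single {K ι : Type*} [Semiring K] [DecidableEq ι] {i j : ι}
    {c d : K} (hc : c ≠ 0) (h : c • Pi.single i (1 : K) = d • Pi.single j 1) : i = j := by
  by_contra hij
  exact hc (by simpa [hij] using congrFun h i)

namespace Pi

variable (K : Type*) {ι : Type*} [Semiring K] [DecidableEq ι]

def supportedOn (S : Set ι) : Submodule K (ι → K) :=
  Submodule.span K ((fun i => Pi.single i 1) '' S)

variable {K}

theorem mem_supportedOn [Finite ι] {S : Set ι} {x : ι → K} :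
    x ∈ supportedOn K S ↔ ∀ i ∉ S, x i = 0 := by
  have := (Pi.basisFun K ι).mem_span_image (m := x) (s := S)
  simp only [Pi.basisFun_apply] at this
  rw [supportedOn, this]
  simp [Set.subset_def, not_imp_comm]

theorem supportedOn_ne_bot [Nontrivial K] {S : Set ι} {i : ι} (hi : i ∈ S) :
    supportedOn K S ≠ ⊥ :=
  fun h => Pi.single_ne_zero_iff.mpr one_ne_zero <|
    (Submodule.eq_bot_iff _).mp h _ (Submodule.subset_span ⟨i, hi, rfl⟩)

theorem apply_mem_supportedOn {S : Set ι} {f : (ι → K) →ₗ[K] (ι → K)}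
    (hf : ∀ j ∈ S, ∃ i ∈ S, ∃ c : K, f (Pi.single j 1) = c • Pi.single i 1) {x : ι → K}
    (hx : x ∈ supportedOn K S) : f x ∈ supportedOn K S := by
  refine (Submodule.span_le (p := (supportedOn K S).comap f)).mpr ?_ hx
  rintro _ ⟨j, hj, rfl⟩
  obtain ⟨i, hi, c, hc⟩ := hf j hj
  rw [SetLike.mem_coe, Submodule.mem_comap, hc]
  exact Submodule.smul_mem _ c (Submodule.subset_span ⟨i, hi, rfl⟩)

theorem existsUnique_add_eq_of_supportedOn [Finite ι] (S : Set ι) (z : ι → K) :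
    ∃! w : supportedOn K S × supportedOn K Sᶜ, (w.1 : ι → K) + w.2 = z := by
  classical
  refine ⟨(⟨S.indicator z, mem_supportedOn.mpr fun i hi => S.indicator_of_notMem hi z⟩,
    ⟨Sᶜ.indicator z, mem_supportedOn.mpr fun i hi => Sᶜ.indicator_of_notMem hi z⟩),
    S.indicator_self_add_compl z, ?_⟩
  rintro ⟨⟨x, hx⟩, ⟨y, hy⟩⟩ rfl
  rw [mem_supportedOn] at hx hy
  ext i <;> by_cases hi : i ∈ S <;> simp_all

end Pi

namespace Representation

variable {K G ι : Type*} [Semifield K] [Group G]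

theorem inv_apply_eq_inv_smul {V : Type*} [AddCommMonoid V] [Module K V]
    (ρ : Representation K G V) {g : G} {v w : V} {c : K} (hc : c ≠ 0) (h : ρ g v = c • w) :
    ρ g⁻¹ w = c⁻¹ • v :=
  calc ρ g⁻¹ w = c⁻¹ • ρ g⁻¹ (c • w) := by rw [map_smul, inv_smul_smul₀ hc]
    _ = c⁻¹ • v := by rw [← h, ρ.inv_self_apply]

variable (ρ : Representation K G (ι → K))

theorem apply_eq_self_of_apply_eq_smul (hidem : ∀ a : K, a + a = a) {g : G}
    (hg : IsOfFinOrder g) {x : ι → K} (hx : x ≠ 0) {c : K} (h : ρ g x = c • x) : ρ g x = x := by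
  have hpow : ∀ m : ℕ, ρ (g ^ m) x = c ^ m • x := by
    intro m
    induction m with
    | zero => simp
    | succ m ih =>
      rw [pow_succ, map_mul, Module.End.mul_apply, h, map_smul, ih, smul_smul, pow_succ']
  obtain ⟨i, hi⟩ := Function.ne_iff.mp hx
  have hc : c ^ orderOf g = 1 := by
    have := congrFun (hpow (orderOf g)) i
    rw [pow_orderOf_eq_one, map_one, Module.End.one_apply, Pi.smul_apply, smul_eq_mul] at this
    exact mul_right_cancel₀ hi (by rw [one_mul, ← this])
  rw [h, eq_one_of_pow_eq_one_of_idem hidem hg.orderOf_pos.ne' hc, one_smul]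

theorem mem_iff_apply_eq_self (hidem : ∀ a : K, a + a = a) [Finite G] {H : Subgroup G}
    {x : ι → K} (hx : x ≠ 0) (hH : ∀ g : G, g ∈ H ↔ (K ∙ x).map (ρ g) = K ∙ x) (g : G) :
    g ∈ H ↔ ρ g x = x := by
  rw [hH, Submodule.map_span, Set.image_singleton]
  refine ⟨fun hg => ?_, fun hg => by rw [hg]⟩
  obtain ⟨c, hc⟩ := Submodule.mem_span_singleton.mp (hg ▸ Submodule.mem_span_singleton_self _)
  exact ρ.apply_eq_self_of_apply_eq_smul hidem (isOfFinOrder_of_finite g) hx hc.symm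

variable [DecidableEq ι]

theorem exists_apply_single_eq_smul_single_of_indecomposable [Finite ι]
    (hmono : ∀ g j, ∃ i, ∃ c ≠ (0 : K), ρ g (Pi.single j 1) = c • Pi.single i 1)
    (hindec : ¬ ∃ p q : Submodule K (ι → K),
        (∀ g : G, ∀ y ∈ p, ρ g y ∈ p) ∧ (∀ g : G, ∀ y ∈ q, ρ g y ∈ q) ∧
        p ≠ ⊥ ∧ q ≠ ⊥ ∧
        ∀ z : ι → K, ∃! w : p × q, (w.1 : ι → K) + (w.2 : ι → K) = z)
    (i₀ i : ι) : ∃ g : G, ∃ c : K, ρ g (Pi.single i₀ 1) = c • Pi.single i 1 := by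
  set S := {i | ∃ g : G, ∃ c : K, ρ g (Pi.single i₀ 1) = c • Pi.single i 1}
  by_contra hi
  have hS : ∀ g, ∀ j ∈ S, ∃ k ∈ S, ∃ c : K, ρ g (Pi.single j 1) = c • Pi.single k 1 := by
    rintro g j ⟨g', c', hg'⟩
    obtain ⟨k, c, -, hk⟩ := hmono g j
    refine ⟨k, ⟨g * g', c' * c, ?_⟩, c, hk⟩
    rw [map_mul, Module.End.mul_apply, hg', map_smul, hk, smul_smul]
  have hSc : ∀ g, ∀ j ∈ Sᶜ, ∃ k ∈ Sᶜ, ∃ c : K, ρ g (Pi.single j 1) = c • Pi.single k 1 := by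
    intro g j hj
    obtain ⟨k, c, hc, hk⟩ := hmono g j
    refine ⟨k, fun ⟨g', c', hg'⟩ => hj ⟨g⁻¹ * g', c' * c⁻¹, ?_⟩, c, hk⟩
    rw [map_mul, Module.End.mul_apply, hg', map_smul, ρ.inv_apply_eq_inv_smul hc hk, smul_smul]
  have hi₀ : i₀ ∈ S := ⟨1, 1, by simp⟩
  exact hindec ⟨Pi.supportedOn K S, Pi.supportedOn K Sᶜ,
    fun g _ => Pi.apply_mem_supportedOn (hS g), fun g _ => Pi.apply_mem_supportedOn (hSc g),
    Pi.supportedOn_ne_bot hi₀, Pi.supportedOn_ne_bot hi, Pi.existsUnique_add_eq_of_supportedOn S⟩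

theorem exists_basis_coset_eq_apply (hidem : ∀ a : K, a + a = a) [Finite G] [Finite ι]
    (hmono : ∀ g j, ∃ i, ∃ c ≠ (0 : K), ρ g (Pi.single j 1) = c • Pi.single i 1)
    {i₀ : ι} (htrans : ∀ i, ∃ g : G, ∃ c : K, ρ g (Pi.single i₀ 1) = c • Pi.single i 1)
    {H : Subgroup G}
    (hH : ∀ g : G, g ∈ H ↔ (K ∙ Pi.single i₀ 1).map (ρ g) = K ∙ Pi.single i₀ (1 : K)) :
    ∃ b : Basis (G ⧸ H) K (ι → K), ∀ g : G, b g = ρ g (Pi.single i₀ 1) := by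
  have he : (Pi.single i₀ 1 : ι → K) ≠ 0 := Pi.single_ne_zero_iff.mpr one_ne_zero
  have hmem := ρ.mem_iff_apply_eq_self hidem he hH
  have hout (g : G) : ρ (g : G ⧸ H).out (Pi.single i₀ 1) = ρ g (Pi.single i₀ 1) := by
    obtain ⟨h, hh⟩ := QuotientGroup.mk_out_eq_mul H g
    rw [hh, map_mul, Module.End.mul_apply, (hmem h).1 h.2]
  choose φ c hc hv using fun x : G ⧸ H => hmono x.out i₀
  have hφ : Bijective φ := by
    refine ⟨fun x y hxy => ?_, fun i => ?_⟩
    · rw [← x.out_eq', ← y.out_eq', QuotientGroup.eq, hmem]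
      refine ρ.apply_eq_self_of_apply_eq_smul hidem (isOfFinOrder_of_finite _) he
        (c := (c x)⁻¹ * c y) ?_
      rw [map_mul, Module.End.mul_apply, hv y, ← hxy, map_smul,
        ρ.inv_apply_eq_inv_smul (hc x) (hv x), smul_smul, mul_comm]
    · obtain ⟨g, d, hg⟩ := htrans i
      exact ⟨g, eq_of_smul_single_eq_smul_single (hc _) (by rw [← hv, hout, hg])⟩
  refine ⟨((Pi.basisFun K ι).reindex (Equiv.ofBijective φ hφ).symm).unitsSMul
    fun x => Units.mk0 (c x) (hc x), fun g => ?_⟩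
  rw [Basis.unitsSMul_apply, Basis.reindex_apply, Equiv.symm_symm, Equiv.ofBijective_apply,
    Pi.basisFun_apply, Units.smul_mk0, ← hv, hout]

end Representation

theorem MonoidAlgebra.mapDomainLinearMap_eq_iff {R M N : Type*} [Semiring R] (f : M → N)
    {x y : MonoidAlgebra R M} :
    mapDomainLinearMap R R f x = mapDomainLinearMap R R f y ↔
      addConGen (fun a b : MonoidAlgebra R M =>
        ∃ (m m' : M) (r : R), f m = f m' ∧ a = single m r ∧ b = single m' r) x y := by
  set c := addConGen (fun a b : MonoidAlgebra R M =>
    ∃ (m m' : M) (r : R), f m = f m' ∧ a = single m r ∧ b = single m' r)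
  refine ⟨fun hxy => ?_, fun hxy => ?_⟩
  · rcases isEmpty_or_nonempty M with _ | _
    · obtain rfl : x = y := MonoidAlgebra.coeff_injective (Subsingleton.elim _ _)
      exact c.refl x
    -- moving every coefficient to a chosen representative of its fibre stays in the class
    have hrep (z : MonoidAlgebra R M) :
        c z (mapDomainLinearMap R R (invFun f ∘ f) z) := by
      induction z using MonoidAlgebra.induction_linear with
      | zero => simpa using c.refl 0
      | add z z' hz hz' => simpa using c.add hz hz'
      | single m r =>
        exact AddConGen.Rel.of _ _ ⟨m, _, r, (invFun_eq ⟨m, rfl⟩).symm, rfl, by simp⟩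
    refine c.trans (hrep x) (c.symm ?_)
    simpa [mapDomainLinearMap_comp, hxy] using hrep y
  · refine (AddCon.ker_rel (mapDomainLinearMap R R f)).mp ?_
    refine AddCon.addConGen_le.mpr ?_ hxy
    rintro _ _ ⟨m, m', r, hm, rfl, rfl⟩
    simp [AddCon.ker_rel, hm]

theorem MonoidAlgebra.mapDomainLinearMap_mk_eq_iff {R G : Type*} [Semiring R] [Group G]
    {H : Subgroup G} {x y : MonoidAlgebra R G} :
    mapDomainLinearMap R R ((↑) : G → G ⧸ H) x = mapDomainLinearMap R R (↑) y ↔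
      addConGen (fun a b : MonoidAlgebra R G =>
        ∃ (g h : G) (r : R), h ∈ H ∧ a = single g r ∧ b = single (g * h) r) x y := by
  have hrel : (fun a b : MonoidAlgebra R G =>
      ∃ (g g' : G) (r : R), (g : G ⧸ H) = g' ∧ a = single g r ∧ b = single g' r) =
      fun a b => ∃ (g h : G) (r : R), h ∈ H ∧ a = single g r ∧ b = single (g * h) r := by
    ext a b
    constructor
    · rintro ⟨g, g', r, hg, rfl, rfl⟩
      exact ⟨g, g⁻¹ * g', r, QuotientGroup.eq.mp hg, rfl, by rw [mul_inv_cancel_left]⟩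
    · rintro ⟨g, h, r, hh, rfl, rfl⟩
      exact ⟨g, g * h, r, QuotientGroup.eq.mpr (by simpa), rfl, rfl⟩
  rw [mapDomainLinearMap_eq_iff, hrel]

namespace Module.Basis

variable {K G V : Type*} [Semiring K] [Group G] [AddCommMonoid V] [Module K V] {H : Subgroup G}
  (b : Basis (G ⧸ H) K V)

noncomputable def cosetProj : MonoidAlgebra K G →ₗ[K] V :=
  b.repr.symm.toLinearMap ∘ₗ (MonoidAlgebra.coeffLinearEquiv K).toLinearMap ∘ₗ
    MonoidAlgebra.mapDomainLinearMap K K (↑)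

theorem cosetProj_single (g : G) (c : K) :
    b.cosetProj (MonoidAlgebra.single g c) = c • b g := by
  simp [cosetProj]

theorem cosetProj_surjective : Surjective b.cosetProj := by
  intro v
  obtain ⟨x, hx⟩ := Finsupp.mapDomain_surjective QuotientGroup.mk_surjective (b.repr v)
  exact ⟨MonoidAlgebra.ofCoeff x, by simp [cosetProj, hx]⟩

theorem cosetProj_eq_iff {x y : MonoidAlgebra K G} :
    b.cosetProj x = b.cosetProj y ↔
      addConGen (fun u v : MonoidAlgebra K G =>
        ∃ (g h : G) (c : K), h ∈ H ∧ u = .single g c ∧ v = .single (g * h) c) x y := by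
  rw [← MonoidAlgebra.mapDomainLinearMap_mk_eq_iff]
  exact (b.repr.symm.injective.comp (MonoidAlgebra.coeffLinearEquiv K).injective).eq_iff

end Module.Basis

theorem Module.Basis.cosetProj_single_one_mul {K G V : Type*} [CommSemiring K] [Group G]
    [AddCommMonoid V] [Module K V] {H : Subgroup G} (ρ : Representation K G V)
    (b : Basis (G ⧸ H) K V) (hb : ∀ g g' : G, ρ g (b g') = b ↑(g * g')) (g : G)
    (x : MonoidAlgebra K G) :
    b.cosetProj (MonoidAlgebra.single g 1 * x) = ρ g (b.cosetProj x) := by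
  induction x using MonoidAlgebra.induction_linear with
  | zero => simp
  | add x y hx hy => rw [mul_add, map_add, map_add, hx, hy, map_add]
  | single g' c =>
    rw [MonoidAlgebra.single_mul_single, one_mul, cosetProj_single, cosetProj_single, map_smul, hb]

/-- Every indecomposable representation `V = K^n` of a finite group `G` over
an idempotent semifield `K`, with associated subgroup `H` (the stabilizer of
a basis line), is isomorphic to the quotient of the regular representation
`K[G]` by the module congruence identifying `g` with `gh` for `g ∈ G`,
`h ∈ H`: there is an equivariant surjection `π : K[G] → V` whose kernel
congruence is exactly the congruence generated by these identifications,
and `V` is a free `K`-module with basis the set `G ⧸ H` of left cosets. -/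
theorem indecomposable_is_quotient_of_regular
    (K G : Type*) [Semifield K] (hidem : ∀ a : K, a + a = a)
    [Group G] [Fintype G] (n : ℕ) (ρ : Representation K G (Fin n → K))
    (hindec : ¬ ∃ p q : Submodule K (Fin n → K),
        (∀ g : G, ∀ y ∈ p, ρ g y ∈ p) ∧ (∀ g : G, ∀ y ∈ q, ρ g y ∈ q) ∧
        p ≠ ⊥ ∧ q ≠ ⊥ ∧
        ∀ z : Fin n → K, ∃! w : p × q, (w.1 : Fin n → K) + (w.2 : Fin n → K) = z)
    (i₀ : Fin n) (H : Subgroup G)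
    (hH : ∀ g : G, g ∈ H ↔
        Submodule.map (ρ g) (Submodule.span K {Pi.single i₀ (1 : K)}) =
          Submodule.span K {Pi.single i₀ (1 : K)}) :
    ∃ π : MonoidAlgebra K G →ₗ[K] (Fin n → K),
      Function.Surjective π ∧
      (∀ (g : G) (x : MonoidAlgebra K G),
          π (MonoidAlgebra.single g (1 : K) * x) = ρ g (π x)) ∧
      (∀ a b : MonoidAlgebra K G,
          π a = π b ↔
            addConGen
              (fun a b : MonoidAlgebra K G =>
                ∃ (g h : G) (c : K), h ∈ H ∧
                  a = MonoidAlgebra.single g c ∧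
                  b = MonoidAlgebra.single (g * h) c) a b) ∧
      Nonempty (Module.Basis (G ⧸ H) K (Fin n → K)) := by
  have hmono (g : G) (j : Fin n) :
      ∃ i, ∃ c ≠ (0 : K), ρ g (Pi.single j 1) = c • Pi.single i 1 :=
    Module.End.exists_apply_single_eq_smul_single hidem ((Group.isUnit g).map ρ) j
  obtain ⟨b, hb⟩ := ρ.exists_basis_coset_eq_apply hidem hmono
    (ρ.exists_apply_single_eq_smul_single_of_indecomposable hmono hindec i₀) hH
  have hbρ (g g' : G) : ρ g (b g') = b ↑(g * g') := by
    rw [hb, hb, map_mul, Module.End.mul_apply]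
  exact ⟨b.cosetProj, b.cosetProj_surjective, b.cosetProj_single_one_mul ρ hbρ,
    fun _ _ => b.cosetProj_eq_iff, ⟨b⟩⟩
end

section
/- Let G be a finite group and M a finitely generated 𝔹[G]-module. Then M is isomorphic as a 𝔹[G]-module to a submodule of 𝔹[G]^n for some natural number n. -/
/-!
For a finite group `G`, a `B`-linear functional `φ : M → B` induces the `G`-equivariant map
`x ↦ ∑ g, φ (g⁻¹ • x) • g` into `B[G]`, whose coefficient at `1` is `φ x` again. So any finite
family of functionals separating the points of `M` gives an equivariant embedding into a power
of `B[G]`. Over the Boolean semifield `M` is a finite join-semilattice under `x ≤ m ↔ x + m = m`,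
and the indicators of the complements of the principal ideals `{x | x ≤ m}`, one per `m : M`,
are linear and separate points.
-/

open MonoidAlgebra

section GroupAlgebra

variable {B G M : Type*} [CommSemiring B] [Group G] [Fintype G]
  [AddCommMonoid M] [Module B M] [DistribMulAction G M] [SMulCommClass G B M]

variable (G) in
noncomputable def dualToGroupAlgebra (φ : M →ₗ[B] B) : M →ₗ[B] MonoidAlgebra B G :=
  ∑ g : G, (lsingle g).comp (φ.comp (DistribSMul.toLinearMap B M g⁻¹))

theorem dualToGroupAlgebra_apply (φ : M →ₗ[B] B) (x : M) :
    dualToGroupAlgebra G φ x = ∑ g : G, single g (φ (g⁻¹ • x)) := by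
  simp [dualToGroupAlgebra, lsingle_apply]

theorem dualToGroupAlgebra_smul (φ : M →ₗ[B] B) (g : G) (x : M) :
    dualToGroupAlgebra G φ (g • x) = single g 1 * dualToGroupAlgebra G φ x := by
  simp only [dualToGroupAlgebra_apply, Finset.mul_sum, single_mul_single, one_mul]
  exact Fintype.sum_equiv (Equiv.mulLeft g⁻¹) _ _ fun k => by simp [mul_smul]

theorem coeff_one_dualToGroupAlgebra (φ : M →ₗ[B] B) (x : M) :
    (dualToGroupAlgebra G φ x).coeff 1 = φ x := by
  classical
  simp [dualToGroupAlgebra_apply, Finsupp.single_apply]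

theorem exists_injective_equivariant_of_separating {ι : Type*} [Finite ι]
    (φ : ι → M →ₗ[B] B) (hsep : ∀ x y, (∀ i, φ i x = φ i y) → x = y) :
    ∃ (n : ℕ) (f : M →ₗ[B] (Fin n → MonoidAlgebra B G)),
      Function.Injective f ∧
      ∀ (g : G) (x : M) (i : Fin n), f (g • x) i = single g (1 : B) * f x i := by
  obtain ⟨n, ⟨e⟩⟩ := Finite.exists_equiv_fin ι
  refine ⟨n, LinearMap.pi fun i => dualToGroupAlgebra G (φ (e.symm i)), ?_, ?_⟩
  · refine fun x y hxy => hsep x y fun i => ?_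
    have := congrArg (fun v => (v (e i)).coeff 1) hxy
    simpa [coeff_one_dualToGroupAlgebra] using this
  · intro g x i
    exact dualToGroupAlgebra_smul _ g x

end GroupAlgebra

section Boolean

variable {B M : Type*} [AddCommMonoid M]

open Classical in
noncomputable def notBelow (B : Type*) [Zero B] [One B] (m x : M) : B :=
  if x + m = m then 0 else 1

theorem notBelow_eq_zero_iff [Zero B] [One B] (hne : (0 : B) ≠ 1) {m x : M} :
    notBelow B m x = 0 ↔ x + m = m := by
  unfold notBelow
  split_ifs with h <;> simp [h, hne.symm]

variable [CommSemiring B] [Module B M]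

theorem add_self_of_one_add_one (hidem : (1 : B) + 1 = 1) (x : M) : x + x = x := by
  simpa [add_smul] using congrArg (· • x) hidem

theorem add_add_eq_right_iff (hidem : (1 : B) + 1 = 1) {x y m : M} :
    x + y + m = m ↔ x + m = m ∧ y + m = m := by
  refine ⟨fun h => ⟨?_, ?_⟩, fun ⟨hx, hy⟩ => by rw [add_assoc, hy, hx]⟩
  · rw [← h, ← add_assoc, ← add_assoc, add_self_of_one_add_one hidem, h]
  · rw [← h, add_comm x y, ← add_assoc, ← add_assoc, add_self_of_one_add_one hidem,
      add_comm y x, h]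

noncomputable def notBelowₗ (htwo : ∀ a : B, a = 0 ∨ a = 1) (hidem : (1 : B) + 1 = 1) (m : M) :
    M →ₗ[B] B where
  toFun := notBelow B m
  map_add' x y := by
    unfold notBelow
    rw [add_add_eq_right_iff hidem]
    split_ifs <;> simp_all
  map_smul' c x := by
    rcases htwo c with rfl | rfl
    · simp [notBelow]
    · simp

theorem eq_of_notBelow_eq (hidem : (1 : B) + 1 = 1) (hne : (0 : B) ≠ 1) {x y : M}
    (h : ∀ m, notBelow B m x = notBelow B m y) : x = y := by
  have below_self (z : M) : notBelow B z z = 0 :=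
    (notBelow_eq_zero_iff hne).2 (add_self_of_one_add_one hidem z)
  have hxy : x + y = y := (notBelow_eq_zero_iff hne).1 ((h y).trans (below_self y))
  have hyx : y + x = x := (notBelow_eq_zero_iff hne).1 ((h x).symm.trans (below_self x))
  rw [← hyx, add_comm, hxy]

end Boolean

/-- Every finitely generated `𝔹[G]`-module `M` (for `G` a finite group and
`𝔹` the Boolean semifield, here an arbitrary two-element idempotent semiring
`B`) embeds `G`-equivariantly and `B`-linearly into `𝔹[G]^n` for some `n`,
where `G` acts on `𝔹[G]` by left multiplication. -/
theorem boolean_module_embeds_into_power_of_group_algebra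
    (B G M : Type*) [CommSemiring B]
    (htwo : ∀ a : B, a = 0 ∨ a = 1) (hidem : (1 : B) + 1 = 1) (hne : (0 : B) ≠ 1)
    [Group G] [Fintype G]
    [AddCommMonoid M] [Module B M] [Module.Finite B M]
    [DistribMulAction G M] [SMulCommClass G B M] :
    ∃ (n : ℕ) (f : M →ₗ[B] (Fin n → MonoidAlgebra B G)),
      Function.Injective f ∧
      ∀ (g : G) (x : M) (i : Fin n),
        f (g • x) i = MonoidAlgebra.single g (1 : B) * f x i := by
  have : Finite B := Finite.of_surjective (fun b : Bool => if b then (1 : B) else 0) fun a => by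
    rcases htwo a with rfl | rfl
    exacts [⟨false, rfl⟩, ⟨true, rfl⟩]
  have : Finite M := Module.finite_of_finite B
  exact exists_injective_equivariant_of_separating (notBelowₗ htwo hidem)
    fun _ _ => eq_of_notBelow_eq hidem hne
end
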